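/- Let X be a mean-zero Gaussian random vector in ℝᵖ with positive definite covariance matrix Σ, let ε be a mean-zero, square-integrable real random variable independent of X, and suppose Y = Xᵀβ* + ε for some fixed β* ∈ ℝᵖ. Fix j ∈ {1,…,p}, write X_{-j} for X with its j-th coordinate deleted, Σ_{(j)} for Σ with its j-th row and column deleted, γ_j = E[X_j · X_{-j}], and β^{(j)} = Σ_{(j)}⁻¹·E[X_{-j}·Y]. Then the retraining variable-importance estimate VI_rt(j) = E[(Y − X_{-j}ᵀβ^{(j)})²] − E[(Y − Xᵀβ*)²] equals (β*_j)² · (Σ_{jj} − γ_jᵀ Σ_{(j)}⁻¹ γ_j). -/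

import Mathlib

open MeasureTheory Matrix ProbabilityTheory

open MeasureTheory Real Filter ProbabilityTheory
open scoped NNReal ENNReal

lemma tendsto_exp_neg_sq {b : ℝ} (hb : 0 < b) :
    Tendsto (fun x : ℝ => Real.exp (-b * x ^ 2)) atTop (nhds 0) := by
  have h1 : Tendsto (fun x : ℝ => b * x ^ 2) atTop atTop :=
    (tendsto_pow_atTop (two_ne_zero)).const_mul_atTop hb
  have h2 : Tendsto (fun x : ℝ => -b * x ^ 2) atTop atBot := by
    simpa [neg_mul, Function.comp_def] using tendsto_neg_atTop_atBot.comp h1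
  exact Real.tendsto_exp_atBot.comp h2

lemma tendsto_exp_neg_sq_bot {b : ℝ} (hb : 0 < b) :
    Tendsto (fun x : ℝ => Real.exp (-b * x ^ 2)) atBot (nhds 0) := by
  have := (tendsto_exp_neg_sq hb).comp tendsto_neg_atBot_atTop
  simpa [Function.comp_def] using this

lemma hasDerivAt_exp_neg_sq {b : ℝ} (hb : 0 < b) (x : ℝ) :
    HasDerivAt (fun y : ℝ => -(2 * b)⁻¹ * Real.exp (-b * y ^ 2)) (x * Real.exp (-b * x ^ 2)) x := by
  have h1 : HasDerivAt (fun y : ℝ => -b * y ^ 2) (-b * (2 * x)) x := by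
    simpa using ((hasDerivAt_pow 2 x).const_mul (-b))
  have h2 := (h1.exp).const_mul (-(2 * b)⁻¹)
  refine h2.congr_deriv ?_
  field_simp


lemma integral_x_exp_neg_sq {b : ℝ} (hb : 0 < b) :
    ∫ x : ℝ, x * Real.exp (-b * x ^ 2) = 0 := by
  have h := MeasureTheory.integral_of_hasDerivAt_of_tendsto
    (f := fun y : ℝ => -(2 * b)⁻¹ * Real.exp (-b * y ^ 2))
    (f' := fun x : ℝ => x * Real.exp (-b * x ^ 2))
    (fun x => hasDerivAt_exp_neg_sq hb x)
    (integrable_mul_exp_neg_mul_sq hb)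
    (m := 0) (n := 0) ?_ ?_
  · simpa using h
  · simpa using (tendsto_exp_neg_sq_bot hb).const_mul (-(2*b)⁻¹)
  · simpa using (tendsto_exp_neg_sq hb).const_mul (-(2*b)⁻¹)

lemma integrable_sq_exp_neg_sq {b : ℝ} (hb : 0 < b) :
    MeasureTheory.Integrable (fun x : ℝ => x ^ 2 * Real.exp (-b * x ^ 2)) := by
  have := integrable_rpow_mul_exp_neg_mul_sq hb (s := 2) (by norm_num)
  refine this.congr ?_
  filter_upwards with x
  rw [show ((2:ℝ) = ((2:ℕ):ℝ)) by norm_num, Real.rpow_natCast]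

lemma integral_sq_exp_neg_sq {b : ℝ} (hb : 0 < b) :
    ∫ x : ℝ, x ^ 2 * Real.exp (-b * x ^ 2) = Real.sqrt (π / b) / (2 * b) := by
  have h := MeasureTheory.integral_mul_deriv_eq_deriv_mul_of_integrable
    (u := fun y : ℝ => y) (u' := fun _ => (1:ℝ))
    (v := fun y : ℝ => -(2 * b)⁻¹ * Real.exp (-b * y ^ 2))
    (v' := fun x : ℝ => x * Real.exp (-b * x ^ 2))
    (fun x _ => hasDerivAt_id x) (fun x _ => hasDerivAt_exp_neg_sq hb x)
    ?_ ?_ ?_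
  · have h2 : ∫ x : ℝ, x * (x * Real.exp (-b * x ^ 2))
        = -∫ x : ℝ, (1:ℝ) * (-(2 * b)⁻¹ * Real.exp (-b * x ^ 2)) := h
    have h3 : ∫ x : ℝ, x * (x * Real.exp (-b * x ^ 2))
        = ∫ x : ℝ, x ^ 2 * Real.exp (-b * x ^ 2) := by
      congr 1; funext x; ring
    have h4 : ∫ x : ℝ, (1:ℝ) * (-(2 * b)⁻¹ * Real.exp (-b * x ^ 2))
        = -(2 * b)⁻¹ * ∫ x : ℝ, Real.exp (-b * x ^ 2) := by
      simp_rw [one_mul]; exact MeasureTheory.integral_const_mul _ _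
    rw [h3, h4, integral_gaussian] at h2
    rw [h2]; field_simp
  · refine (integrable_sq_exp_neg_sq hb).congr ?_
    filter_upwards with x; simp [Pi.mul_apply]; ring
  · refine ((integrable_exp_neg_mul_sq hb).const_mul (-(2 * b)⁻¹)).congr ?_
    filter_upwards with x; simp [Pi.mul_apply]
  · refine ((integrable_mul_exp_neg_mul_sq hb).const_mul (-(2 * b)⁻¹)).congr ?_
    filter_upwards with x; simp [Pi.mul_apply]; ring


lemma gaussianReal_integral_eq {v : ℝ≥0} (hv : v ≠ 0) (g : ℝ → ℝ) :
    ∫ x, g x ∂(gaussianReal 0 v) = ∫ x, gaussianPDFReal 0 v x * g x := by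
  rw [gaussianReal_of_var_ne_zero _ hv]
  have hd : (gaussianPDF 0 v) = fun x => ((gaussianPDFReal 0 v x).toNNReal : ℝ≥0∞) := rfl
  rw [hd, integral_withDensity_eq_integral_smul
    (measurable_gaussianPDFReal 0 v).real_toNNReal g]
  congr 1; funext x
  simp [NNReal.smul_def, Real.coe_toNNReal _ (gaussianPDFReal_nonneg 0 v x)]

lemma gaussianPDFReal_eq {v : ℝ≥0} (hv : v ≠ 0) (x : ℝ) :
    gaussianPDFReal 0 v x = (Real.sqrt (2 * π * v))⁻¹ * Real.exp (-(2 * (v:ℝ))⁻¹ * x ^ 2) := by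
  have hv' : (0:ℝ) < v := by positivity
  rw [gaussianPDFReal]
  congr 2
  field_simp
  ring

lemma integral_id_gaussianReal' (v : ℝ≥0) : ∫ x, x ∂(gaussianReal 0 v) = 0 := by
  rcases eq_or_ne v 0 with rfl | hv
  · simp [gaussianReal_zero_var]
  · have hv' : (0:ℝ) < v := by positivity
    have hb : (0:ℝ) < (2 * (v:ℝ))⁻¹ := by positivity
    rw [gaussianReal_integral_eq hv]
    calc ∫ x, gaussianPDFReal 0 v x * x
        = ∫ x, (Real.sqrt (2 * π * v))⁻¹ * (x * Real.exp (-(2 * (v:ℝ))⁻¹ * x ^ 2)) := by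
          congr 1; funext x; rw [gaussianPDFReal_eq hv]; ring
      _ = (Real.sqrt (2 * π * v))⁻¹ * ∫ x, x * Real.exp (-(2 * (v:ℝ))⁻¹ * x ^ 2) :=
          integral_const_mul _ _
      _ = 0 := by rw [integral_x_exp_neg_sq hb, mul_zero]

lemma integral_sq_gaussianReal (v : ℝ≥0) : ∫ x, x ^ 2 ∂(gaussianReal 0 v) = v := by
  rcases eq_or_ne v 0 with rfl | hv
  · simp [gaussianReal_zero_var]
  · have hv' : (0:ℝ) < v := by positivity
    have hb : (0:ℝ) < (2 * (v:ℝ))⁻¹ := by positivity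
    rw [gaussianReal_integral_eq hv]
    calc ∫ x, gaussianPDFReal 0 v x * x ^ 2
        = ∫ x, (Real.sqrt (2 * π * v))⁻¹ * (x ^ 2 * Real.exp (-(2 * (v:ℝ))⁻¹ * x ^ 2)) := by
          congr 1; funext x; rw [gaussianPDFReal_eq hv]; ring
      _ = (Real.sqrt (2 * π * v))⁻¹ * ∫ x, x ^ 2 * Real.exp (-(2 * (v:ℝ))⁻¹ * x ^ 2) :=
          integral_const_mul _ _
      _ = (Real.sqrt (2 * π * v))⁻¹ * (Real.sqrt (π / (2 * (v:ℝ))⁻¹) / (2 * (2 * (v:ℝ))⁻¹)) := by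
          rw [integral_sq_exp_neg_sq hb]
      _ = v := by
          rw [show π / (2 * (v:ℝ))⁻¹ = 2 * π * v by field_simp]
          have hs : (0:ℝ) < Real.sqrt (2 * π * v) := Real.sqrt_pos.mpr (by positivity)
          field_simp

lemma memℒp_id_gaussianReal (v : ℝ≥0) : MemLp (id : ℝ → ℝ) 2 (gaussianReal 0 v) := by
  rcases eq_or_ne v 0 with rfl | hv
  · rw [gaussianReal_zero_var]
    have : (id : ℝ → ℝ) =ᵐ[Measure.dirac 0] (fun _ => (0:ℝ)) := by
      rw [Filter.EventuallyEq, ae_dirac_eq]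
      simp
    exact (memLp_const (0:ℝ)).ae_eq this.symm
  · have hv' : (0:ℝ) < v := by positivity
    have hb : (0:ℝ) < (2 * (v:ℝ))⁻¹ := by positivity
    rw [memLp_two_iff_integrable_sq aestronglyMeasurable_id]
    rw [gaussianReal_of_var_ne_zero _ hv, gaussianPDF_def]
    rw [integrable_withDensity_iff (measurable_gaussianPDFReal 0 v).ennreal_ofReal
      (by filter_upwards with x; exact ENNReal.ofReal_lt_top)]
    have : Integrable (fun x : ℝ => (Real.sqrt (2 * π * v))⁻¹ *
        (x ^ 2 * Real.exp (-(2 * (v:ℝ))⁻¹ * x ^ 2))) :=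
      (integrable_sq_exp_neg_sq hb).const_mul _
    refine this.congr ?_
    filter_upwards with x
    simp only [id]
    rw [ENNReal.toReal_ofReal (gaussianPDFReal_nonneg 0 v x), gaussianPDFReal_eq hv]
    ring

open Matrix

lemma memℒp_mul_integrable {Ω : Type*} [MeasurableSpace Ω] {μ : Measure Ω} {f g : Ω → ℝ}
    (hf : MemLp f 2 μ) (hg : MemLp g 2 μ) : Integrable (fun ω => f ω * g ω) μ := by
  have hpqr : (1 : ℝ≥0∞) / 1 = 1 / 2 + 1 / 2 := by
    rw [one_div_one]; exact (ENNReal.add_halves 1).symm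
  have h := hf.smul hg (r := 1)
  rw [memLp_one_iff_integrable] at h
  exact h.congr (by filter_upwards with ω; simp [mul_comm])


/-- Under a linear model `Y = Xᵀβ* + ε` with `X` mean-zero Gaussian with
positive definite covariance `Σ` and `ε` mean-zero, square-integrable and independent of
`X`, the retraining variable-importance estimate for variable `j` equals
`(β*ⱼ)²(Σⱼⱼ − γⱼᵀΣ₍ⱼ₎⁻¹γⱼ)`. -/
theorem retrain_vi_linear_model {Ωs : Type*} [MeasurableSpace Ωs] (μ : Measure Ωs)
    [IsProbabilityMeasure μ] {p : ℕ}
    (X : Ωs → Fin p → ℝ) (hXmeas : Measurable X)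
    (Sig : Matrix (Fin p) (Fin p) ℝ) (hSigpd : Sig.PosDef)
    (hgauss : ∀ a : Fin p → ℝ,
      Measure.map (fun ω => a ⬝ᵥ X ω) μ = gaussianReal 0 (a ⬝ᵥ (Sig *ᵥ a)).toNNReal)
    (ε : Ωs → ℝ) (hεmeas : Measurable ε) (hε2 : MemLp ε 2 μ)
    (hεmean : ∫ ω, ε ω ∂μ = 0)
    (hindep : IndepFun X ε μ)
    (βstar : Fin p → ℝ)
    (Y : Ωs → ℝ) (hY : Y = fun ω => X ω ⬝ᵥ βstar + ε ω)
    (j : Fin p)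
    (Sigj : Matrix {i : Fin p // i ≠ j} {i : Fin p // i ≠ j} ℝ)
    (hSigj : Sigj = Sig.submatrix Subtype.val Subtype.val)
    (γ : {i : Fin p // i ≠ j} → ℝ)
    (hγ : γ = fun i => ∫ ω, X ω j * X ω i.val ∂μ)
    (βj : {i : Fin p // i ≠ j} → ℝ)
    (hβj : βj = Sigj⁻¹ *ᵥ fun i => ∫ ω, X ω i.val * Y ω ∂μ)
    (VIrt : ℝ)
    (hVIrt : VIrt =
      (∫ ω, (Y ω - ∑ i : {i : Fin p // i ≠ j}, X ω i.val * βj i) ^ 2 ∂μ)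
        - ∫ ω, (Y ω - X ω ⬝ᵥ βstar) ^ 2 ∂μ) :
    VIrt = βstar j ^ 2 * (Sig j j - γ ⬝ᵥ (Sigj⁻¹ *ᵥ γ)) := by
  -- measurability of linear functionals of X
  have hXi : ∀ i, Measurable fun ω => X ω i := fun i => (measurable_pi_apply i).comp hXmeas
  have hdm : ∀ a : Fin p → ℝ, Measurable fun ω => a ⬝ᵥ X ω := by
    intro a
    have : (fun ω => a ⬝ᵥ X ω) = fun ω => ∑ i, a i * X ω i := rfl
    rw [this]
    exact Finset.measurable_sum _ (fun i _ => (hXi i).const_mul (a i))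
  have hmem : ∀ a : Fin p → ℝ, MemLp (fun ω => a ⬝ᵥ X ω) 2 μ := by
    intro a
    have h := memℒp_id_gaussianReal ((a ⬝ᵥ (Sig *ᵥ a)).toNNReal)
    rw [← hgauss a] at h
    exact (memLp_map_measure_iff aestronglyMeasurable_id (hdm a).aemeasurable).mp h
  have hmean : ∀ a : Fin p → ℝ, ∫ ω, a ⬝ᵥ X ω ∂μ = 0 := by
    intro a
    have h2 : ∫ ω, a ⬝ᵥ X ω ∂μ = ∫ x, x ∂(Measure.map (fun ω => a ⬝ᵥ X ω) μ) :=
      (integral_map (hdm a).aemeasurable aestronglyMeasurable_id).symm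
    rw [h2, hgauss a, integral_id_gaussianReal']
  have hnn : ∀ a : Fin p → ℝ, 0 ≤ a ⬝ᵥ (Sig *ᵥ a) := by
    intro a
    simpa using hSigpd.posSemidef.dotProduct_mulVec_nonneg a
  have hsq : ∀ a : Fin p → ℝ, ∫ ω, (a ⬝ᵥ X ω) ^ 2 ∂μ = a ⬝ᵥ (Sig *ᵥ a) := by
    intro a
    have h2 : ∫ ω, (a ⬝ᵥ X ω) ^ 2 ∂μ = ∫ x, x ^ 2 ∂(Measure.map (fun ω => a ⬝ᵥ X ω) μ) :=
      (integral_map (hdm a).aemeasurable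
        ((measurable_id.pow_const 2).aestronglyMeasurable)).symm
    rw [h2, hgauss a, integral_sq_gaussianReal, Real.coe_toNNReal _ (hnn a)]
  have hent : ∀ i k, Sig i k = Sig k i := by
    intro i k
    have := congrFun (congrFun hSigpd.1 k) i
    simpa using this
  have hsymm : ∀ a b : Fin p → ℝ, b ⬝ᵥ (Sig *ᵥ a) = a ⬝ᵥ (Sig *ᵥ b) := by
    intro a b
    show (∑ i, b i * ∑ k, Sig i k * a k) = ∑ i, a i * ∑ k, Sig i k * b k
    simp_rw [Finset.mul_sum]
    rw [Finset.sum_comm]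
    refine Finset.sum_congr rfl fun i _ => Finset.sum_congr rfl fun k _ => ?_
    rw [hent k i]; ring
  have hcov : ∀ a b : Fin p → ℝ,
      ∫ ω, (a ⬝ᵥ X ω) * (b ⬝ᵥ X ω) ∂μ = a ⬝ᵥ (Sig *ᵥ b) := by
    intro a b
    have h := hsq (a + b)
    have hexp : (fun ω => ((a + b) ⬝ᵥ X ω) ^ 2) = fun ω =>
        (a ⬝ᵥ X ω) ^ 2 + ((a ⬝ᵥ X ω) * (b ⬝ᵥ X ω) + (a ⬝ᵥ X ω) * (b ⬝ᵥ X ω))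
          + (b ⬝ᵥ X ω) ^ 2 := by
      funext ω; rw [add_dotProduct]; ring
    have Ia := (hmem a).integrable_sq
    have Ib := (hmem b).integrable_sq
    have Iab := memℒp_mul_integrable (hmem a) (hmem b)
    have I2 : Integrable (fun ω => (a ⬝ᵥ X ω) * (b ⬝ᵥ X ω) + (a ⬝ᵥ X ω) * (b ⬝ᵥ X ω)) μ :=
      Iab.add Iab
    have I1 : Integrable (fun ω => (a ⬝ᵥ X ω) ^ 2
        + ((a ⬝ᵥ X ω) * (b ⬝ᵥ X ω) + (a ⬝ᵥ X ω) * (b ⬝ᵥ X ω))) μ := Ia.add I2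
    rw [hexp, integral_add I1 Ib, integral_add Ia I2, integral_add Iab Iab,
      hsq a, hsq b] at h
    have hr : (a + b) ⬝ᵥ (Sig *ᵥ (a + b))
        = a ⬝ᵥ (Sig *ᵥ a) + (a ⬝ᵥ (Sig *ᵥ b) + a ⬝ᵥ (Sig *ᵥ b)) + b ⬝ᵥ (Sig *ᵥ b) := by
      rw [add_dotProduct, Matrix.mulVec_add, dotProduct_add,
        dotProduct_add, hsymm b a]
      ring
    rw [hr] at h
    linarith
  have hXe : ∀ a : Fin p → ℝ, ∫ ω, (a ⬝ᵥ X ω) * ε ω ∂μ = 0 := by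
    intro a
    have hφ : Measurable fun x : Fin p → ℝ => a ⬝ᵥ x := by
      have : (fun x : Fin p → ℝ => a ⬝ᵥ x) = fun x => ∑ i, a i * x i := rfl
      rw [this]
      exact Finset.measurable_sum _ (fun i _ => by fun_prop)
    have hi : IndepFun (fun ω => a ⬝ᵥ X ω) ε μ := hindep.comp hφ measurable_id
    rw [hi.integral_fun_mul_eq_mul_integral (hmem a).1 hε2.1, hmean a, zero_mul]
  -- sum splitting
  have hsplit : ∀ g : Fin p → ℝ, ∑ i, g i = g j + ∑ i : {i : Fin p // i ≠ j}, g i.val := by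
    intro g
    rw [← Finset.add_sum_erase Finset.univ g (Finset.mem_univ j)]
    congr 1
    exact Finset.sum_subtype _ (fun x => by simp [Finset.mem_erase]) g
  set bb : Fin p → ℝ := fun i => if h : i = j then 0 else βj ⟨i, h⟩ with hbb
  set aa : Fin p → ℝ := βstar - bb with haa
  have hbX : ∀ ω, (∑ i : {i : Fin p // i ≠ j}, X ω i.val * βj i) = bb ⬝ᵥ X ω := by
    intro ω
    have h1 : bb ⬝ᵥ X ω = ∑ i, bb i * X ω i := rfl
    rw [h1, hsplit (fun i => bb i * X ω i)]
    simp only [hbb, dif_pos rfl, zero_mul, zero_add]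
    refine Finset.sum_congr rfl fun i _ => ?_
    rw [dif_neg i.prop]
    simp [mul_comm]
  have hYsub : ∀ ω, Y ω - (bb ⬝ᵥ X ω) = (aa ⬝ᵥ X ω) + ε ω := by
    intro ω
    rw [hY]
    show X ω ⬝ᵥ βstar + ε ω - bb ⬝ᵥ X ω = aa ⬝ᵥ X ω + ε ω
    rw [haa, sub_dotProduct, dotProduct_comm (X ω) βstar]
    ring
  -- second error integral
  have hE2 : ∫ ω, (Y ω - X ω ⬝ᵥ βstar) ^ 2 ∂μ = ∫ ω, ε ω ^ 2 ∂μ := by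
    rw [hY]; simp
  -- first error integral
  have hE1 : ∫ ω, (Y ω - ∑ i : {i : Fin p // i ≠ j}, X ω i.val * βj i) ^ 2 ∂μ
      = aa ⬝ᵥ (Sig *ᵥ aa) + ∫ ω, ε ω ^ 2 ∂μ := by
    have hpt : (fun ω => (Y ω - ∑ i : {i : Fin p // i ≠ j}, X ω i.val * βj i) ^ 2)
        = fun ω => (aa ⬝ᵥ X ω) ^ 2 + (2 * ((aa ⬝ᵥ X ω) * ε ω) + ε ω ^ 2) := by
      funext ω
      rw [hbX ω, hYsub ω]
      ring
    have Iaa := (hmem aa).integrable_sq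
    have Iae := memℒp_mul_integrable (hmem aa) hε2
    have Ie2 := hε2.integrable_sq
    have I3 : Integrable (fun ω => 2 * ((aa ⬝ᵥ X ω) * ε ω) + ε ω ^ 2) μ :=
      (Iae.const_mul 2).add Ie2
    rw [hpt, integral_add Iaa I3, integral_add (Iae.const_mul 2) Ie2,
      integral_const_mul 2, hXe aa, hsq aa]
    ring
  have hVI : VIrt = aa ⬝ᵥ (Sig *ᵥ aa) := by
    rw [hVIrt, hE1, hE2]; ring
  -- positive definiteness and invertibility of Sigj
  have hSigj_pd : Sigj.PosDef := by
    rw [hSigj, posDef_iff_dotProduct_mulVec]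
    constructor
    · exact hSigpd.1.submatrix _
    · intro x hx
      set y : Fin p → ℝ := fun k => if h : k = j then 0 else x ⟨k, h⟩ with hy
      have hyne : y ≠ 0 := by
        obtain ⟨i, hi⟩ := Function.ne_iff.mp hx
        refine Function.ne_iff.mpr ⟨i.val, ?_⟩
        simp only [hy, dif_neg i.prop, Pi.zero_apply]
        simpa using hi
      have hq := (posDef_iff_dotProduct_mulVec.mp hSigpd).2 hyne
      simp only [star_trivial] at hq ⊢
      have h1 : ∀ k, (Sig *ᵥ y) k = ∑ i : {i : Fin p // i ≠ j}, Sig k i.val * x i := by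
        intro k
        show (∑ l, Sig k l * y l) = _
        rw [hsplit (fun l => Sig k l * y l)]
        simp only [hy, dif_pos rfl, mul_zero, zero_add]
        refine Finset.sum_congr rfl fun i _ => ?_
        rw [dif_neg i.prop]
      have h2 : y ⬝ᵥ (Sig *ᵥ y) = x ⬝ᵥ ((Sig.submatrix Subtype.val Subtype.val) *ᵥ x) := by
        have lhs : y ⬝ᵥ (Sig *ᵥ y) = ∑ k, y k * (Sig *ᵥ y) k := rfl
        have rhs : x ⬝ᵥ ((Sig.submatrix Subtype.val Subtype.val) *ᵥ x)
            = ∑ i : {i : Fin p // i ≠ j}, x i * ∑ k : {i : Fin p // i ≠ j},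
                Sig i.val k.val * x k := rfl
        rw [lhs, rhs, hsplit (fun k => y k * (Sig *ᵥ y) k)]
        simp only [hy, dif_pos rfl, zero_mul, zero_add]
        refine Finset.sum_congr rfl fun i _ => ?_
        rw [dif_neg i.prop, h1]
      rw [← h2]
      exact hq
  have hdet : IsUnit Sigj.det := isUnit_iff_ne_zero.mpr (ne_of_gt hSigj_pd.det_pos)
  have hinv1 : ∀ w, Sigj *ᵥ (Sigj⁻¹ *ᵥ w) = w := by
    intro w
    rw [Matrix.mulVec_mulVec, Matrix.mul_nonsing_inv _ hdet, Matrix.one_mulVec]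
  have hinv2 : ∀ w, Sigj⁻¹ *ᵥ (Sigj *ᵥ w) = w := by
    intro w
    rw [Matrix.mulVec_mulVec, Matrix.nonsing_inv_mul _ hdet, Matrix.one_mulVec]
  -- identification of γ
  have hXj : ∀ (i : Fin p) ω, X ω i = (Pi.single i 1 : Fin p → ℝ) ⬝ᵥ X ω := by
    intro i ω
    rw [single_dotProduct, one_mul]
  have hγ' : ∀ i : {i : Fin p // i ≠ j}, γ i = Sig j i.val := by
    intro i
    have hγi : γ i = ∫ ω, X ω j * X ω i.val ∂μ := by rw [hγ]
    rw [hγi]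
    have h1 : ∫ ω, X ω j * X ω i.val ∂μ
        = (Pi.single j 1 : Fin p → ℝ) ⬝ᵥ (Sig *ᵥ (Pi.single i.val 1 : Fin p → ℝ)) := by
      rw [← hcov]
      congr 1
      funext ω
      rw [← hXj, ← hXj]
    rw [h1, Matrix.mulVec_single, single_dotProduct]
    simp
  -- computation of βj
  have hβj' : βj = (fun i : {i : Fin p // i ≠ j} => βstar i.val)
      + (βstar j) • (Sigj⁻¹ *ᵥ γ) := by
    rw [hβj]
    have hv : (fun i : {i : Fin p // i ≠ j} => ∫ ω, X ω i.val * Y ω ∂μ)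
        = Sigj *ᵥ (fun i => βstar i.val) + (βstar j) • γ := by
      funext i
      have e0 : (fun ω => X ω i.val * Y ω)
          = fun ω => ((Pi.single i.val 1 : Fin p → ℝ) ⬝ᵥ X ω) * (βstar ⬝ᵥ X ω)
            + ((Pi.single i.val 1 : Fin p → ℝ) ⬝ᵥ X ω) * ε ω := by
        funext ω
        simp only [hY]
        rw [← hXj i.val ω, dotProduct_comm (X ω) βstar]
        ring
      have Ia := memℒp_mul_integrable (hmem (Pi.single i.val 1)) (hmem βstar)
      have Ib := memℒp_mul_integrable (hmem (Pi.single i.val 1)) hε2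
      have e1 : ∫ ω, X ω i.val * Y ω ∂μ = (Sig *ᵥ βstar) i.val := by
        rw [show ∫ ω, X ω i.val * Y ω ∂μ
            = ∫ ω, ((Pi.single i.val 1 : Fin p → ℝ) ⬝ᵥ X ω) * (βstar ⬝ᵥ X ω)
              + ((Pi.single i.val 1 : Fin p → ℝ) ⬝ᵥ X ω) * ε ω ∂μ from by rw [e0],
          integral_add Ia Ib, hcov, hXe, single_dotProduct, one_mul, add_zero]
      rw [e1]
      have hL : (Sig *ᵥ βstar) i.val
          = Sig i.val j * βstar j
            + ∑ k : {i : Fin p // i ≠ j}, Sig i.val k.val * βstar k.val := by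
        show (∑ l, Sig i.val l * βstar l) = _
        rw [hsplit (fun l => Sig i.val l * βstar l)]
      have hR : (Sigj *ᵥ (fun i : {i : Fin p // i ≠ j} => βstar i.val)) i
          = ∑ k : {i : Fin p // i ≠ j}, Sig i.val k.val * βstar k.val := by
        rw [hSigj]; rfl
      simp only [Pi.add_apply, Pi.smul_apply, smul_eq_mul]
      rw [hL, hR, hγ' i, hent i.val j]
      ring
    rw [hv, Matrix.mulVec_add, hinv2, Matrix.mulVec_smul]
  -- final algebra
  set c : {i : Fin p // i ≠ j} → ℝ := Sigj⁻¹ *ᵥ γ with hc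
  set t : ℝ := βstar j with ht
  have haaj : aa j = t := by
    simp [haa, hbb, ht]
  have haai : ∀ i : {i : Fin p // i ≠ j}, aa i.val = -(t * c i) := by
    intro i
    have hbbi : bb i.val = βj i := by
      simp only [hbb]
      rw [dif_neg i.prop, Subtype.coe_eta]
    simp only [haa, Pi.sub_apply, hbbi, hβj', Pi.add_apply, Pi.smul_apply, smul_eq_mul]
    ring
  have hkey : ∀ i : {i : Fin p // i ≠ j},
      (∑ k : {i : Fin p // i ≠ j}, Sig i.val k.val * c k) = γ i := by
    intro i
    have h0 := congrFun (hinv1 γ) i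
    rw [← h0, hc, hSigj]
    rfl
  have hγc : (∑ k : {i : Fin p // i ≠ j}, Sig j k.val * c k) = γ ⬝ᵥ c := by
    refine Finset.sum_congr rfl fun k _ => ?_
    rw [← hγ' k]
  have hSv : ∀ k, (Sig *ᵥ aa) k
      = Sig k j * t - t * (∑ i : {i : Fin p // i ≠ j}, Sig k i.val * c i) := by
    intro k
    have h1 : (Sig *ᵥ aa) k = ∑ l, Sig k l * aa l := rfl
    rw [h1, hsplit (fun l => Sig k l * aa l), haaj]
    have h2 : (∑ i : {i : Fin p // i ≠ j}, Sig k i.val * aa i.val)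
        = ∑ i : {i : Fin p // i ≠ j}, -(t * (Sig k i.val * c i)) := by
      refine Finset.sum_congr rfl fun i _ => ?_
      rw [haai i]; ring
    rw [h2, Finset.sum_neg_distrib, ← Finset.mul_sum]
    ring
  have hfin : aa ⬝ᵥ (Sig *ᵥ aa) = t ^ 2 * (Sig j j - γ ⬝ᵥ c) := by
    have h1 : aa ⬝ᵥ (Sig *ᵥ aa) = ∑ k, aa k * (Sig *ᵥ aa) k := rfl
    rw [h1, hsplit (fun k => aa k * (Sig *ᵥ aa) k), haaj, hSv j, hγc]
    have hz : (∑ i : {i : Fin p // i ≠ j}, aa i.val * (Sig *ᵥ aa) i.val) = 0 := by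
      refine Finset.sum_eq_zero fun i _ => ?_
      rw [hSv i.val, hkey i, hent i.val j, ← hγ' i]
      ring
    rw [hz, add_zero]
    ring
  rw [hVI, hfin]
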